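/- Let θ ∈ (0, π). If h is a positive convex solution (∇²h + hσ > 0 on C_θ) of any equation with the Robin boundary condition ∇_μ h = cot θ · h on ∂C_θ, then the gradient bound max_{C_θ} |∇h| ≤ (1 + cot²θ)^{1/2} · max_{C_θ} h holds. -/

import Mathlib

/- Formalization of statements from "The L_p dual Minkowski problem for capillary
hypersurfaces".

We work in the ambient space `ℝ^{n+1}`.  The spherical cap `C_θ` is the part of the unit
sphere centred at `cos θ • e` (where `e = -E_{n+1}`) lying in the closed upper half-space.
Functions on `C_θ` are represented by ambient functions `h : Euc n → ℝ`; the intrinsic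
(round-metric) gradient `∇h` and Hessian `∇²h` of the restriction of `h` to `C_θ` are
expressed through ambient derivatives (for tangential arguments these expressions depend
only on the restriction of `h` to the cap).  The quantity `det(∇²h + hσ)` is encoded as the
determinant of the endomorphism of `ℝ^{n+1}` acting as `∇²h + hσ` on the tangent space of
the cap and as the identity on the normal line. -/

open Real Set
open scoped RealInnerProductSpace

noncomputable section

/-- Ambient Euclidean space `ℝ^{n+1}`. -/
abbrev Euc (n : ℕ) : Type := EuclideanSpace ℝ (Fin (n + 1))

/-- The unit vector `e = -E_{n+1}`. -/
def eVec (n : ℕ) : Euc n := -(EuclideanSpace.single (Fin.last n) (1 : ℝ))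

/-- `ν(ξ) = ξ - cos θ • e`, the unit normal (at `ξ`) of the sphere containing the cap `C_θ`. -/
def sphNormal (n : ℕ) (θ : ℝ) (ξ : Euc n) : Euc n := ξ - Real.cos θ • eVec n

/-- The spherical cap `C_θ = {ξ ∈ closure ℝ^{n+1}_+ : |ξ - cos θ • e| = 1}`. -/
def cap (n : ℕ) (θ : ℝ) : Set (Euc n) :=
  {ξ | 0 ≤ ξ (Fin.last n) ∧ ‖sphNormal n θ ξ‖ = 1}

/-- The boundary `∂C_θ`. -/
def capBdry (n : ℕ) (θ : ℝ) : Set (Euc n) :=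
  {ξ | ξ (Fin.last n) = 0 ∧ ‖sphNormal n θ ξ‖ = 1}

/-- The outward unit conormal `μ` of `∂C_θ` in `C_θ` (at boundary points). -/
def conormal (n : ℕ) (θ : ℝ) (ξ : Euc n) : Euc n :=
  Real.cot θ • ξ + Real.sin θ • eVec n

/-- Orthogonal projection of `ℝ^{n+1}` onto the tangent space of the cap at `ξ`. -/
def tproj (n : ℕ) (θ : ℝ) (ξ : Euc n) : Euc n →L[ℝ] Euc n :=
  ContinuousLinearMap.id ℝ (Euc n) - (innerSL ℝ (sphNormal n θ ξ)).smulRight (sphNormal n θ ξ)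

/-- `X` is tangent to the cap at `ξ`. -/
def IsTangent (n : ℕ) (θ : ℝ) (ξ X : Euc n) : Prop :=
  ⟪X, sphNormal n θ ξ⟫ = 0

/-- Intrinsic (round-metric) gradient `∇h` of `h` on the cap. -/
def sgrad (n : ℕ) (θ : ℝ) (h : Euc n → ℝ) (ξ : Euc n) : Euc n :=
  tproj n θ ξ (gradient h ξ)

/-- Intrinsic (round-metric) Hessian `∇²h(X,Y)` of `h` on the cap (tangential arguments). -/
def shess (n : ℕ) (θ : ℝ) (h : Euc n → ℝ) (ξ X Y : Euc n) : ℝ :=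
  ⟪(fderiv ℝ (gradient h) ξ) X, Y⟫ - ⟪gradient h ξ, sphNormal n θ ξ⟫ * ⟪X, Y⟫

/-- Endomorphism representing the intrinsic Hessian `∇²h` on tangent vectors
(and vanishing on the normal line). -/
def thessOp (n : ℕ) (θ : ℝ) (h : Euc n → ℝ) (ξ : Euc n) : Euc n →L[ℝ] Euc n :=
  ((tproj n θ ξ).comp ((fderiv ℝ (gradient h) ξ).comp (tproj n θ ξ)))
    - ⟪gradient h ξ, sphNormal n θ ξ⟫ • tproj n θ ξ

/-- Rank-one projection onto the normal direction at `ξ`. -/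
def normalPart (n : ℕ) (θ : ℝ) (ξ : Euc n) : Euc n →L[ℝ] Euc n :=
  (innerSL ℝ (sphNormal n θ ξ)).smulRight (sphNormal n θ ξ)

/-- Endomorphism acting as `∇²h + hσ` on the tangent space and as the identity on the
normal line. -/
def hessOp (n : ℕ) (θ : ℝ) (h : Euc n → ℝ) (ξ : Euc n) : Euc n →L[ℝ] Euc n :=
  thessOp n θ h ξ + h ξ • tproj n θ ξ + normalPart n θ ξ

/-- `det(∇²h + hσ)` at `ξ`. -/
def sdet (n : ℕ) (θ : ℝ) (h : Euc n → ℝ) (ξ : Euc n) : ℝ :=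
  LinearMap.det (hessOp n θ h ξ).toLinearMap

/-- `h > 0` on the cap. -/
def PosOnCap (n : ℕ) (θ : ℝ) (h : Euc n → ℝ) : Prop := ∀ ξ ∈ cap n θ, 0 < h ξ

/-- Convexity of a solution: `∇²h + hσ > 0` on the cap. -/
def IsConvexSol (n : ℕ) (θ : ℝ) (h : Euc n → ℝ) : Prop :=
  ∀ ξ ∈ cap n θ, ∀ X : Euc n, IsTangent n θ ξ X → X ≠ 0 →
    0 < shess n θ h ξ X X + h ξ * ⟪X, X⟫

/-- The right-hand side `f·h^{p-1}·(h² + |∇h|²)^{(n+1-q)/2}`. -/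
def eqRHS (n : ℕ) (θ p q : ℝ) (f h : Euc n → ℝ) (ξ : Euc n) : ℝ :=
  f ξ * h ξ ^ (p - 1) * (h ξ ^ 2 + ‖sgrad n θ h ξ‖ ^ 2) ^ (((n : ℝ) + 1 - q) / 2)

/-- `h` solves `det(∇²h + hσ) = f·h^{p-1}(h² + |∇h|²)^{(n+1-q)/2}` in `C_θ`. -/
def SolvesEq (n : ℕ) (θ p q : ℝ) (f h : Euc n → ℝ) : Prop :=
  ∀ ξ ∈ cap n θ, sdet n θ h ξ = eqRHS n θ p q f h ξ

/-- Robin boundary condition `∇_μ h = cot θ · h` on `∂C_θ`. -/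
def RobinBC (n : ℕ) (θ : ℝ) (h : Euc n → ℝ) : Prop :=
  ∀ ξ ∈ capBdry n θ, ⟪sgrad n θ h ξ, conormal n θ ξ⟫ = Real.cot θ * h ξ

/-- `l(ξ) = sin²θ + cos θ·⟨ξ, e⟩`. -/
def lFun (n : ℕ) (θ : ℝ) (ξ : Euc n) : ℝ :=
  Real.sin θ ^ 2 + Real.cos θ * ⟪ξ, eVec n⟫

/-- `‖f‖_{C⁰(C_θ)} ≤ K`. -/
def CZeroNormLe (n : ℕ) (θ : ℝ) (f : Euc n → ℝ) (K : ℝ) : Prop :=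
  ∀ ξ ∈ cap n θ, |f ξ| ≤ K

/-- `‖f‖_{C¹(C_θ)} ≤ K`. -/
def COneNormLe (n : ℕ) (θ : ℝ) (f : Euc n → ℝ) (K : ℝ) : Prop :=
  CZeroNormLe n θ f K ∧ ∀ ξ ∈ cap n θ, ‖sgrad n θ f ξ‖ ≤ K

/-- `‖f‖_{C²(C_θ)} ≤ K`. -/
def CTwoNormLe (n : ℕ) (θ : ℝ) (f : Euc n → ℝ) (K : ℝ) : Prop :=
  COneNormLe n θ f K ∧
    ∀ ξ ∈ cap n θ, ∀ X Y : Euc n, IsTangent n θ ξ X → IsTangent n θ ξ Y →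
      |shess n θ f ξ X Y| ≤ K * ‖X‖ * ‖Y‖

/-- The linearized operator `L_h(γ)` of the equation `𝒢(∇²h,h) = 𝒥₁(∇h,h)` at `h`:
the derivative at `ε = 0` of `𝒢 - 𝒥₁` along the variation `h_ε = h·e^{εγ}`
(cf. equation (5.4) of the paper, which is exactly this derivative). -/
def linOp (n : ℕ) (θ p q : ℝ) (f h γ : Euc n → ℝ) (ξ : Euc n) : ℝ :=
  deriv (fun ε : ℝ =>
    sdet n θ (fun x => h x * Real.exp (ε * γ x)) ξ
      - eqRHS n θ p q f (fun x => h x * Real.exp (ε * γ x)) ξ) 0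

/-- Endomorphism acting as `l·∇²u + cos θ·(∇u ⊗ e^T + e^T ⊗ ∇u) + uσ` on the tangent space
and as the identity on the normal line. -/
def capillaryOp (n : ℕ) (θ : ℝ) (u : Euc n → ℝ) (ξ : Euc n) : Euc n →L[ℝ] Euc n :=
  lFun n θ ξ • thessOp n θ u ξ
    + Real.cos θ • ((innerSL ℝ (sgrad n θ u ξ)).smulRight (tproj n θ ξ (eVec n))
        + (innerSL ℝ (tproj n θ ξ (eVec n))).smulRight (sgrad n θ u ξ))
    + u ξ • tproj n θ ξ + normalPart n θ ξ

/-- Endomorphism acting as `∇²v + ∇v ⊗ ∇v + σ` on the tangent space and as the identity on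
the normal line. -/
def logOp (n : ℕ) (θ : ℝ) (v : Euc n → ℝ) (ξ : Euc n) : Euc n →L[ℝ] Euc n :=
  thessOp n θ v ξ + (innerSL ℝ (sgrad n θ v ξ)).smulRight (sgrad n θ v ξ)
    + tproj n θ ξ + normalPart n θ ξ

/-- Geodesic distance on `C_θ` from `ξ` to the top point `N = (0,…,0,1-cos θ)`
(for `θ ∈ (0,π/2)` the cap is geodesically convex, so this is `arccos ⟨ν(ξ), ν(N)⟩`). -/
def distToTop (n : ℕ) (θ : ℝ) (ξ : Euc n) : ℝ :=
  Real.arccos (ξ (Fin.last n) + Real.cos θ)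

/-- The function `d := d_N²/(2θ)`. -/
def dCap (n : ℕ) (θ : ℝ) (ξ : Euc n) : ℝ := distToTop n θ ξ ^ 2 / (2 * θ)

/-! Let `ξ₀` maximise `P = h² + |∇h|²` over the compact cap. Differentiating `P` along a curve
through `ξ₀` that stays in `C_θ` and has velocity `z` gives `(∇²h + hσ)(z, ∇h) = 0`. At an
interior point take `z = ∇h`: convexity forces `∇h = 0`. At a boundary point write
`∇h = v + cot θ · h · μ` with `v` tangent to `∂C_θ`; moving along `∂C_θ` in the direction `v`
and differentiating the Robin condition gives `∇²h(v, μ) = 0`, hence `(∇²h + hσ)(v, v) = 0` and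
`v = 0`. Either way `P(ξ₀) ≤ (1 + cot²θ) h(ξ₀)²`, and `|∇h|² ≤ P ≤ P(ξ₀)` everywhere. -/

section GreatCircle

variable {E : Type*} [NormedAddCommGroup E] [InnerProductSpace ℝ E]

theorem norm_cos_smul_add_sin_smul {p q : E} (hpq : ⟪p, q⟫ = 0) (hq : ‖q‖ = ‖p‖) (s : ℝ) :
    ‖Real.cos s • p + Real.sin s • q‖ = ‖p‖ := by
  have hpq' : ⟪Real.cos s • p, Real.sin s • q⟫ = 0 := by
    rw [real_inner_smul_left, real_inner_smul_right, hpq, mul_zero, mul_zero]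
  have hsq := norm_add_sq_eq_norm_sq_add_norm_sq_real hpq'
  rw [norm_smul, norm_smul, hq, Real.norm_eq_abs, Real.norm_eq_abs] at hsq
  have habs : |Real.cos s| ^ 2 + |Real.sin s| ^ 2 = 1 := by
    rw [sq_abs, sq_abs, Real.cos_sq_add_sin_sq]
  refine (mul_self_inj (norm_nonneg _) (norm_nonneg p)).1 ?_
  linear_combination hsq + ‖p‖ ^ 2 * habs

theorem exists_greatCircle {p : E} (hp : p ≠ 0) {v : E} (hv : ⟪p, v⟫ = 0) :
    ∃ c : ℝ → E, Continuous c ∧ c 0 = p ∧ HasDerivAt c v 0 ∧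
      ∀ s, ‖c s‖ = ‖p‖ ∧ c s ∈ Submodule.span ℝ {p, v} := by
  rcases eq_or_ne v 0 with rfl | hv0
  · exact ⟨fun _ => p, continuous_const, rfl, hasDerivAt_const _ _,
      fun _ => ⟨rfl, Submodule.subset_span (by simp)⟩⟩
  set t := ‖v‖ / ‖p‖
  have ht : t ≠ 0 := div_ne_zero (norm_ne_zero_iff.2 hv0) (norm_ne_zero_iff.2 hp)
  refine ⟨fun s => Real.cos (t * s) • p + Real.sin (t * s) • (t⁻¹ • v), by fun_prop, by simp,
    ?_, fun s => ⟨norm_cos_smul_add_sin_smul ?_ ?_ _, ?_⟩⟩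
  · have hts := (hasDerivAt_id (0 : ℝ)).const_mul t
    have hc := (hts.cos.smul_const p).fun_add (hts.sin.smul_const (t⁻¹ • v))
    simpa only [id, mul_zero, Real.sin_zero, Real.cos_zero, neg_zero, zero_mul, zero_smul,
      zero_add, one_mul, mul_one, smul_smul, mul_inv_cancel₀ ht, one_smul] using hc
  · rw [real_inner_smul_right, hv, mul_zero]
  · rw [norm_smul, norm_inv, Real.norm_eq_abs, abs_of_pos (by positivity)]
    field_simp
    simp [t, hp]
  · exact Submodule.mem_span_pair.2 ⟨_, _, (congrArg _ (smul_smul _ _ v)).symm⟩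

end GreatCircle

section CapGeometry

variable {n : ℕ} {θ : ℝ}

theorem inner_eVec (x : Euc n) : ⟪x, eVec n⟫ = -x (Fin.last n) := by
  simp [eVec, inner_neg_right, EuclideanSpace.inner_single_right]

theorem norm_eVec : ‖eVec n‖ = 1 := by
  simp [eVec]

theorem isCompact_cap : IsCompact (cap n θ) := by
  have hν : Continuous (sphNormal n θ) := by unfold sphNormal; fun_prop
  refine Metric.isCompact_of_isClosed_isBounded ?_ ?_
  · exact (isClosed_le continuous_const (EuclideanSpace.proj (Fin.last n)).continuous).inter
      (isClosed_eq hν.norm continuous_const)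
  · refine (Metric.isBounded_closedBall (x := Real.cos θ • eVec n) (r := 1)).subset fun ξ hξ => ?_
    rw [Metric.mem_closedBall, dist_eq_norm]
    exact hξ.2.le

theorem cap_nonempty : (cap n θ).Nonempty := by
  refine ⟨(1 - Real.cos θ) • EuclideanSpace.single (Fin.last n) 1, ?_, ?_⟩
  · simpa using Real.cos_le_one θ
  · have : sphNormal n θ ((1 - Real.cos θ) • EuclideanSpace.single (Fin.last n) 1)
        = EuclideanSpace.single (Fin.last n) 1 := by
      simp only [sphNormal, eVec, smul_neg, sub_neg_eq_add]
      module
    rw [this, PiLp.norm_single, norm_one]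

theorem capBdry_subset_cap : capBdry n θ ⊆ cap n θ :=
  fun _ hξ => ⟨hξ.1.symm.le, hξ.2⟩

theorem eVec_eq_sin_smul_conormal_sub_cos_smul_sphNormal (hs : Real.sin θ ≠ 0) (ξ : Euc n) :
    eVec n = Real.sin θ • conormal n θ ξ - Real.cos θ • sphNormal n θ ξ := by
  have hsc : Real.sin θ * Real.cot θ = Real.cos θ := by
    rw [Real.cot_eq_cos_div_sin, mul_div_cancel₀ _ hs]
  simp only [conormal, sphNormal, smul_add, smul_sub, smul_smul, hsc]
  rw [← sq, ← sq, add_sub_sub_cancel, ← add_smul, Real.sin_sq_add_cos_sq, one_smul]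

theorem mem_capBdry_iff (hs : 0 < Real.sin θ) {ξ : Euc n} :
    ξ ∈ capBdry n θ ↔ ⟪ξ, eVec n⟫ = 0 ∧ ‖ξ‖ = Real.sin θ := by
  have hν : ⟪ξ, eVec n⟫ = 0 → ‖sphNormal n θ ξ‖ ^ 2 = ‖ξ‖ ^ 2 + Real.cos θ ^ 2 := fun he => by
    rw [sphNormal, @norm_sub_sq_real, real_inner_smul_right, he, norm_smul, norm_eVec,
      Real.norm_eq_abs, mul_one, sq_abs]
    ring
  rw [capBdry, mem_ofPred_eq, inner_eVec, neg_eq_zero]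
  refine and_congr_right fun he => ?_
  have he' : ⟪ξ, eVec n⟫ = 0 := by rw [inner_eVec, he, neg_zero]
  rw [← pow_left_inj₀ (norm_nonneg _) zero_le_one two_ne_zero,
    ← pow_left_inj₀ (norm_nonneg _) hs.le two_ne_zero, hν he', one_pow,
    ← Real.sin_sq_add_cos_sq θ, add_left_inj]

theorem inner_sphNormal_conormal (hs : 0 < Real.sin θ) {ξ : Euc n} (hξ : ξ ∈ capBdry n θ) :
    ⟪sphNormal n θ ξ, conormal n θ ξ⟫ = 0 := by
  obtain ⟨he, hnorm⟩ := (mem_capBdry_iff hs).1 hξ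
  simp only [sphNormal, conormal, inner_sub_left, inner_add_right, real_inner_smul_left,
    real_inner_smul_right, real_inner_self_eq_norm_sq, hnorm, norm_eVec, he,
    real_inner_comm ξ (eVec n), Real.cot_eq_cos_div_sin]
  field_simp
  ring

theorem norm_conormal (hs : 0 < Real.sin θ) {ξ : Euc n} (hξ : ξ ∈ capBdry n θ) :
    ‖conormal n θ ξ‖ = 1 := by
  obtain ⟨he, hnorm⟩ := (mem_capBdry_iff hs).1 hξ
  rw [← pow_left_inj₀ (norm_nonneg _) zero_le_one two_ne_zero, conormal, @norm_add_sq_real,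
    real_inner_smul_left, real_inner_smul_right, he, norm_smul, norm_smul, hnorm, norm_eVec,
    Real.cot_eq_cos_div_sin, Real.norm_eq_abs, Real.norm_eq_abs, abs_div, abs_of_pos hs]
  field_simp
  nlinarith [Real.sin_sq_add_cos_sq θ, sq_abs (Real.cos θ)]

end CapGeometry

section Gradient

variable {F : Type*} [NormedAddCommGroup F] [InnerProductSpace ℝ F] [CompleteSpace F]
  {f : F → ℝ}

theorem ContDiff.gradient {m k : WithTop ℕ∞} (hf : ContDiff ℝ k f) (hmk : m + 1 ≤ k) :
    ContDiff ℝ m (gradient f) :=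
  (InnerProductSpace.toDual ℝ F).symm.contDiff.comp (hf.fderiv_right hmk)

theorem DifferentiableAt.hasDerivAt_comp_curve {c : ℝ → F} {z : F} {t : ℝ}
    (hf : DifferentiableAt ℝ f (c t)) (hc : HasDerivAt c z t) :
    HasDerivAt (fun s => f (c s)) ⟪gradient f (c t), z⟫ t := by
  rw [inner_gradient_left]
  exact hf.hasFDerivAt.comp_hasDerivAt t hc

theorem hasDerivAt_gradient_comp (hf : ContDiff ℝ 2 f) {c : ℝ → F} {z : F} {t : ℝ}
    (hc : HasDerivAt c z t) :
    HasDerivAt (fun s => gradient f (c s)) (fderiv ℝ (gradient f) (c t) z) t :=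
  (((hf.gradient le_rfl).differentiable one_ne_zero) (c t)).hasFDerivAt.comp_hasDerivAt t hc

end Gradient

section SphericalCalculus

variable {n : ℕ} {θ : ℝ} {h : Euc n → ℝ}

theorem sgrad_eq (ξ : Euc n) :
    sgrad n θ h ξ = gradient h ξ - ⟪sphNormal n θ ξ, gradient h ξ⟫ • sphNormal n θ ξ := by
  simp [sgrad, tproj]

theorem continuous_sgrad (hh : ContDiff ℝ 2 h) : Continuous (sgrad n θ h) := by
  have hG : Continuous (gradient h) := (hh.gradient (m := 1) le_rfl).continuous
  have hν : Continuous (sphNormal n θ) := by unfold sphNormal; fun_prop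
  simp_rw [funext sgrad_eq]
  fun_prop

theorem isTangent_sgrad {ξ : Euc n} (hξ : ξ ∈ cap n θ) : IsTangent n θ ξ (sgrad n θ h ξ) := by
  rw [IsTangent, sgrad_eq, inner_sub_left, real_inner_smul_left, real_inner_self_eq_norm_sq,
    hξ.2, real_inner_comm]
  ring

theorem inner_sgrad_of_isTangent {ξ X : Euc n} (hX : IsTangent n θ ξ X) :
    ⟪sgrad n θ h ξ, X⟫ = ⟪gradient h ξ, X⟫ := by
  rw [sgrad_eq, inner_sub_left, real_inner_smul_left, real_inner_comm X (sphNormal n θ ξ), hX,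
    mul_zero, sub_zero]

theorem hasDerivAt_sgrad_comp (hh : ContDiff ℝ 2 h) {c : ℝ → Euc n} {z : Euc n} {t : ℝ}
    (hc : HasDerivAt c z t) :
    HasDerivAt (fun s => sgrad n θ h (c s))
      (fderiv ℝ (gradient h) (c t) z
        - (⟪sphNormal n θ (c t), gradient h (c t)⟫ • z
          + (⟪sphNormal n θ (c t), fderiv ℝ (gradient h) (c t) z⟫ + ⟪z, gradient h (c t)⟫)
            • sphNormal n θ (c t))) t := by
  have hG := hasDerivAt_gradient_comp hh hc
  have hν : HasDerivAt (fun s => sphNormal n θ (c s)) z t := hc.sub_const _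
  simp_rw [sgrad_eq]
  exact hG.sub ((hν.inner ℝ hG).smul hν)

/-- The form `∇²h + hσ` at `ξ`. -/
def convexityForm (n : ℕ) (θ : ℝ) (h : Euc n → ℝ) (ξ X Y : Euc n) : ℝ :=
  shess n θ h ξ X Y + h ξ * ⟪X, Y⟫

theorem IsConvexSol.eq_zero_of_convexityForm_self_eq_zero (hconv : IsConvexSol n θ h)
    {ξ X : Euc n} (hξ : ξ ∈ cap n θ) (hX : IsTangent n θ ξ X)
    (h0 : convexityForm n θ h ξ X X = 0) : X = 0 := by
  by_contra hne
  exact (hconv ξ hξ X hX hne).ne' h0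

def jetNormSq (n : ℕ) (θ : ℝ) (h : Euc n → ℝ) (ξ : Euc n) : ℝ :=
  h ξ ^ 2 + ‖sgrad n θ h ξ‖ ^ 2

theorem hasDerivAt_jetNormSq_comp (hh : ContDiff ℝ 2 h) {c : ℝ → Euc n} {z : Euc n} {t : ℝ}
    (hct : c t ∈ cap n θ) (hc : HasDerivAt c z t) (hz : IsTangent n θ (c t) z) :
    HasDerivAt (fun s => jetNormSq n θ h (c s))
      (2 * convexityForm n θ h (c t) z (sgrad n θ h (c t))) t := by
  have hD := ((hh.differentiable two_ne_zero) (c t)).hasDerivAt_comp_curve hc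
  refine ((hD.pow 2).add (hasDerivAt_sgrad_comp hh hc).norm_sq).congr_deriv ?_
  have hsν : ⟪sgrad n θ h (c t), sphNormal n θ (c t)⟫ = 0 := isTangent_sgrad hct
  rw [← inner_sgrad_of_isTangent hz]
  simp only [convexityForm, shess, inner_sub_right, inner_add_right, real_inner_smul_right,
    hsν, real_inner_comm (fderiv ℝ (gradient h) (c t) z), real_inner_comm z,
    real_inner_comm (sphNormal n θ (c t)) (gradient h (c t))]
  ring

theorem hasDerivAt_inner_sgrad_conormal_comp (hs : 0 < Real.sin θ) (hh : ContDiff ℝ 2 h)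
    {c : ℝ → Euc n} {z : Euc n} {t : ℝ} (hct : c t ∈ capBdry n θ) (hc : HasDerivAt c z t)
    (hz : IsTangent n θ (c t) z) :
    HasDerivAt (fun s => ⟪sgrad n θ h (c s), conormal n θ (c s)⟫)
      (shess n θ h (c t) z (conormal n θ (c t)) + Real.cot θ * ⟪gradient h (c t), z⟫) t := by
  have hμ : HasDerivAt (fun s => conormal n θ (c s)) (Real.cot θ • z) t :=
    (hc.fun_const_smul _).add_const _
  refine ((hasDerivAt_sgrad_comp hh hc).inner ℝ hμ).congr_deriv ?_
  rw [← inner_sgrad_of_isTangent hz]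
  simp only [shess, inner_sub_left, inner_add_left, real_inner_smul_left, real_inner_smul_right,
    inner_sphNormal_conormal hs hct, real_inner_comm (sphNormal n θ (c t)) (gradient h (c t))]
  ring

end SphericalCalculus

section MaximumPoint

open Filter Topology

variable {n : ℕ} {θ : ℝ} {h : Euc n → ℝ}

theorem convexityForm_sgrad_eq_zero_of_isMaxOn (hh : ContDiff ℝ 2 h) {ξ z : Euc n}
    {c : ℝ → Euc n} (hmax : IsMaxOn (jetNormSq n θ h) (cap n θ) ξ) (hc0 : c 0 = ξ)
    (hc : HasDerivAt c z 0) (hcap : ∀ᶠ s in 𝓝 0, c s ∈ cap n θ) (hz : IsTangent n θ ξ z) :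
    convexityForm n θ h ξ z (sgrad n θ h ξ) = 0 := by
  subst hc0
  have hloc : IsLocalMax (fun s => jetNormSq n θ h (c s)) 0 := hcap.mono fun _ hs => hmax hs
  have := hloc.hasDerivAt_eq_zero (hasDerivAt_jetNormSq_comp hh hcap.self_of_nhds hc hz)
  linarith

/-- The Robin condition, differentiated along a curve in `∂C_θ`. -/
theorem shess_conormal_eq_zero (hs : 0 < Real.sin θ) (hh : ContDiff ℝ 2 h)
    (hR : RobinBC n θ h) {ξ z : Euc n} {c : ℝ → Euc n} (hc0 : c 0 = ξ) (hc : HasDerivAt c z 0)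
    (hbd : ∀ᶠ s in 𝓝 0, c s ∈ capBdry n θ) (hz : IsTangent n θ ξ z) :
    shess n θ h ξ z (conormal n θ ξ) = 0 := by
  subst hc0
  have hD := ((hh.differentiable two_ne_zero) (c 0)).hasDerivAt_comp_curve hc
  have hRc : (fun s => ⟪sgrad n θ h (c s), conormal n θ (c s)⟫)
      =ᶠ[𝓝 0] fun s => Real.cot θ * h (c s) :=
    hbd.mono fun s hs => hR _ hs
  have := (hasDerivAt_inner_sgrad_conormal_comp hs hh hbd.self_of_nhds hc hz).unique
    ((hD.const_mul _).congr_of_eventuallyEq hRc)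
  linarith

theorem sgrad_eq_zero_of_isMaxOn (hh : ContDiff ℝ 2 h) (hconv : IsConvexSol n θ h)
    {ξ : Euc n} (hξ : ξ ∈ cap n θ) (hint : 0 < ξ (Fin.last n))
    (hmax : IsMaxOn (jetNormSq n θ h) (cap n θ) ξ) :
    sgrad n θ h ξ = 0 := by
  have hg : IsTangent n θ ξ (sgrad n θ h ξ) := isTangent_sgrad hξ
  have hν : sphNormal n θ ξ ≠ 0 := norm_ne_zero_iff.1 (hξ.2.symm ▸ one_ne_zero)
  obtain ⟨c, hcont, hc0, hc, hcirc⟩ :=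
    exists_greatCircle hν (v := sgrad n θ h ξ) (by rw [real_inner_comm]; exact hg)
  set γ : ℝ → Euc n := fun s => Real.cos θ • eVec n + c s
  have hγ0 : γ 0 = ξ := by simp [γ, hc0, sphNormal]
  have hγcap : ∀ᶠ s in 𝓝 0, γ s ∈ cap n θ := by
    have hlast : Continuous fun s => γ s (Fin.last n) :=
      (EuclideanSpace.proj (Fin.last n)).continuous.comp (continuous_const.add hcont)
    filter_upwards [hlast.continuousAt.preimage_mem_nhds (Ioi_mem_nhds (hγ0 ▸ hint))] with s hs
    refine ⟨hs.le, ?_⟩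
    rw [sphNormal, add_sub_cancel_left, (hcirc s).1, hξ.2]
  exact hconv.eq_zero_of_convexityForm_self_eq_zero hξ hg
    (convexityForm_sgrad_eq_zero_of_isMaxOn hh hmax hγ0 (hc.const_add _) hγcap hg)

theorem sgrad_eq_of_isMaxOn_of_mem_capBdry (hs : 0 < Real.sin θ) (hh : ContDiff ℝ 2 h)
    (hconv : IsConvexSol n θ h) (hR : RobinBC n θ h) {ξ : Euc n} (hξ : ξ ∈ capBdry n θ)
    (hmax : IsMaxOn (jetNormSq n θ h) (cap n θ) ξ) :
    sgrad n θ h ξ = (Real.cot θ * h ξ) • conormal n θ ξ := by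
  obtain ⟨hξe, hξnorm⟩ := (mem_capBdry_iff hs).1 hξ
  set v := sgrad n θ h ξ - (Real.cot θ * h ξ) • conormal n θ ξ with hv
  have hvμ : ⟪v, conormal n θ ξ⟫ = 0 := by
    rw [inner_sub_left, real_inner_smul_left, hR ξ hξ, real_inner_self_eq_norm_sq,
      norm_conormal hs hξ]
    ring
  have hvν : IsTangent n θ ξ v := by
    rw [IsTangent, inner_sub_left, real_inner_smul_left, isTangent_sgrad (capBdry_subset_cap hξ),
      real_inner_comm, inner_sphNormal_conormal hs hξ]
    ring
  have hve : ⟪v, eVec n⟫ = 0 := by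
    rw [eVec_eq_sin_smul_conormal_sub_cos_smul_sphNormal hs.ne' ξ, inner_sub_right,
      real_inner_smul_right, real_inner_smul_right, hvμ, hvν]
    ring
  have hξv : ⟪ξ, v⟫ = 0 := by
    rw [← sub_add_cancel ξ (Real.cos θ • eVec n), inner_add_left, real_inner_smul_left,
      real_inner_comm, ← sphNormal, hvν, real_inner_comm, hve]
    ring
  obtain ⟨c, -, hc0, hc, hcirc⟩ :=
    exists_greatCircle (norm_ne_zero_iff.1 (hξnorm ▸ hs.ne')) hξv
  have hcbd : ∀ s, c s ∈ capBdry n θ := fun s => by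
    obtain ⟨a, b, hab⟩ := Submodule.mem_span_pair.1 (hcirc s).2
    refine (mem_capBdry_iff hs).2 ⟨?_, (hcirc s).1.trans hξnorm⟩
    rw [← hab, inner_add_left, real_inner_smul_left, real_inner_smul_left, hξe, hve]
    ring
  have hmaxv := convexityForm_sgrad_eq_zero_of_isMaxOn hh hmax hc0 hc
    (.of_forall fun s => capBdry_subset_cap (hcbd s)) hvν
  have hRv := shess_conormal_eq_zero hs hh hR hc0 hc (.of_forall hcbd) hvν
  rw [← sub_add_cancel (sgrad n θ h ξ) ((Real.cot θ * h ξ) • conormal n θ ξ), ← hv] at hmaxv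
  have hvv : convexityForm n θ h ξ v v = 0 := by
    simp only [convexityForm, shess, inner_add_right, real_inner_smul_right] at hmaxv hRv ⊢
    linear_combination hmaxv - Real.cot θ * h ξ * hRv - Real.cot θ * h ξ ^ 2 * hvμ
  exact sub_eq_zero.1
    (hconv.eq_zero_of_convexityForm_self_eq_zero (capBdry_subset_cap hξ) hvν hvv)

theorem jetNormSq_le_of_isMaxOn (hs : 0 < Real.sin θ) (hh : ContDiff ℝ 2 h)
    (hconv : IsConvexSol n θ h) (hR : RobinBC n θ h) {ξ : Euc n} (hξ : ξ ∈ cap n θ)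
    (hmax : IsMaxOn (jetNormSq n θ h) (cap n θ) ξ) :
    jetNormSq n θ h ξ ≤ (1 + Real.cot θ ^ 2) * h ξ ^ 2 := by
  rcases hξ.1.lt_or_eq with hint | hbd
  · rw [jetNormSq, sgrad_eq_zero_of_isMaxOn hh hconv hξ hint hmax, norm_zero]
    nlinarith [sq_nonneg (Real.cot θ * h ξ)]
  · have hξ' : ξ ∈ capBdry n θ := ⟨hbd.symm, hξ.2⟩
    rw [jetNormSq, sgrad_eq_of_isMaxOn_of_mem_capBdry hs hh hconv hR hξ' hmax, norm_smul,
      norm_conormal hs hξ', mul_one, Real.norm_eq_abs, sq_abs]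
    exact le_of_eq (by ring)

theorem exists_isMaxOn_jetNormSq (hh : ContDiff ℝ 2 h) :
    ∃ ξ ∈ cap n θ, IsMaxOn (jetNormSq n θ h) (cap n θ) ξ :=
  isCompact_cap.exists_isMaxOn cap_nonempty
    ((hh.continuous.pow 2).add ((continuous_sgrad hh).norm.pow 2)).continuousOn

end MaximumPoint

theorem gradient_estimate_from_convexity_general
    (n : ℕ) (θ : ℝ) (hθ : θ ∈ Set.Ioo 0 π)
    (h : Euc n → ℝ) (hh : ContDiff ℝ 2 h) (hpos : PosOnCap n θ h)
    (hconv : IsConvexSol n θ h) (hR : RobinBC n θ h) :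
    ∀ ξ ∈ cap n θ,
      ‖sgrad n θ h ξ‖ ≤ Real.sqrt (1 + Real.cot θ ^ 2) * sSup (h '' cap n θ) := by
  intro ξ hξ
  have hs : 0 < Real.sin θ := Real.sin_pos_of_pos_of_lt_pi hθ.1 hθ.2
  obtain ⟨ξ₀, hξ₀, hmax⟩ := exists_isMaxOn_jetNormSq (θ := θ) hh
  have hpos₀ := hpos ξ₀ hξ₀
  have hsq : ‖sgrad n θ h ξ‖ ^ 2 ≤ (Real.sqrt (1 + Real.cot θ ^ 2) * h ξ₀) ^ 2 :=
    calc ‖sgrad n θ h ξ‖ ^ 2 ≤ jetNormSq n θ h ξ := le_add_of_nonneg_left (sq_nonneg _)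
      _ ≤ jetNormSq n θ h ξ₀ := hmax hξ
      _ ≤ (1 + Real.cot θ ^ 2) * h ξ₀ ^ 2 := jetNormSq_le_of_isMaxOn hs hh hconv hR hξ₀ hmax
      _ = (Real.sqrt (1 + Real.cot θ ^ 2) * h ξ₀) ^ 2 := by
        rw [mul_pow, Real.sq_sqrt (by positivity)]
  calc ‖sgrad n θ h ξ‖ ≤ Real.sqrt (1 + Real.cot θ ^ 2) * h ξ₀ :=
        (pow_le_pow_iff_left₀ (norm_nonneg _) (by positivity) two_ne_zero).1 hsq
    _ ≤ Real.sqrt (1 + Real.cot θ ^ 2) * sSup (h '' cap n θ) :=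
        mul_le_mul_of_nonneg_left (le_csSup (isCompact_cap.bddAbove_image
          hh.continuous.continuousOn) (mem_image_of_mem h hξ₀)) (Real.sqrt_nonneg _)

/-- Lemma 3.2, `C¹` estimate: for a positive convex `h` satisfying the
Robin boundary condition, `max_{C_θ} |∇h| ≤ (1 + cot²θ)^{1/2}·max_{C_θ} h`;
this uses only convexity and the boundary condition, not the equation. -/
theorem gradient_estimate_from_convexity
    (n : ℕ) (hn : 1 ≤ n) (θ : ℝ) (hθ : θ ∈ Set.Ioo 0 π)
    (h : Euc n → ℝ) (hh : ContDiff ℝ 2 h) (hpos : PosOnCap n θ h)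
    (hconv : IsConvexSol n θ h) (hR : RobinBC n θ h) :
    ∀ ξ ∈ cap n θ,
      ‖sgrad n θ h ξ‖ ≤ Real.sqrt (1 + Real.cot θ ^ 2) * sSup (h '' cap n θ) :=
  gradient_estimate_from_convexity_general n θ hθ h hh hpos hconv hR
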